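/- Let D be an integral domain. The following are equivalent: (i) D is a DW-domain, i.e., every nonzero fractional ideal E of D satisfies E = E^w; (ii) every nonzero prime ideal of D is a w-ideal; (iii) every maximal ideal of D is a w-ideal; (iv) every maximal ideal of D is a t-ideal; (v) GV(D) = {D}, i.e., the only Glaz–Vasconcelos ideal of D is D itself. -/

import Mathlib

/-! If a GV-ideal `J` lies in a maximal ideal `M`, then `J · 1 ⊆ M` puts `1` into `M^w`, and
`J⁻¹ = D` puts `1` into `J^v ⊆ M^t`; so when `M` is a `w`- or a `t`-ideal, `J` cannot be proper.
Conversely, if `D` is the only GV-ideal, every `E^w` is `E` by definition, and for a maximal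
ideal `M` the ideal `M^t ∩ D ⊇ M` is proper: `1 ∈ M^t` would give `1 ∈ F^v` for some finitely
generated `F ⊆ M`, and such an `F` is a GV-ideal. -/

open scoped nonZeroDivisors

/-- The `t`-closure of a fractional ideal `E` of an integral domain `D`:
the union (here: supremum, which is a directed union) of `F^v = (F⁻¹)⁻¹` over all
nonzero finitely generated fractional subideals `F` of `E`, viewed as a
`D`-submodule of the fraction field of `D`. -/
noncomputable def tClos (D : Type*) [CommRing D] [IsDomain D]
    (E : FractionalIdeal D⁰ (FractionRing D)) : Submodule D (FractionRing D) :=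
  ⨆ F ∈ {F : FractionalIdeal D⁰ (FractionRing D) |
      F ≠ 0 ∧ F ≤ E ∧ (F : Submodule D (FractionRing D)).FG},
    (((F⁻¹)⁻¹ : FractionalIdeal D⁰ (FractionRing D)) : Submodule D (FractionRing D))

/-- An integral ideal `I` of an integral domain `D` is a `t`-ideal if `I = I^t`. -/
def Ideal.IsT {D : Type*} [CommRing D] [IsDomain D] (I : Ideal D) : Prop :=
  ((I : FractionalIdeal D⁰ (FractionRing D)) : Submodule D (FractionRing D)) = tClos D I

/-- A Glaz–Vasconcelos ideal of `D`: a nonzero finitely generated integral ideal `J`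
with `J⁻¹ = D`. -/
def IsGV {D : Type*} [CommRing D] [IsDomain D] (J : Ideal D) : Prop :=
  J ≠ ⊥ ∧ J.FG ∧ ((J : FractionalIdeal D⁰ (FractionRing D)))⁻¹ = 1

/-- The `w`-closure of a fractional ideal `E`:
`E^w = {x ∈ K : xJ ⊆ E for some GV-ideal J}`. -/
def wClos (D : Type*) [CommRing D] [IsDomain D]
    (E : FractionalIdeal D⁰ (FractionRing D)) : Set (FractionRing D) :=
  {x : FractionRing D | ∃ J : Ideal D, IsGV J ∧
    ∀ j ∈ J, algebraMap D (FractionRing D) j * x ∈ E}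

/-- A fractional ideal `E` is a `w`-ideal if `E = E^w`. -/
def IsW {D : Type*} [CommRing D] [IsDomain D]
    (E : FractionalIdeal D⁰ (FractionRing D)) : Prop :=
  ((E : Submodule D (FractionRing D)) : Set (FractionRing D)) = wClos D E

namespace FractionalIdeal

variable {R K : Type*} [CommRing R] [IsDomain R] [Field K] [Algebra R K] [IsFractionRing R K]
  {I J : FractionalIdeal R⁰ K}

theorem inv_ne_zero_of_ne_zero (hI : I ≠ 0) : I⁻¹ ≠ 0 := by
  intro h
  have hden := den_mem_inv hI
  rw [h, mem_zero_iff, IsFractionRing.to_map_eq_zero_iff] at hden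
  exact nonZeroDivisors.coe_ne_zero _ hden

theorem le_inv_inv (hI : I ≠ 0) : I ≤ I⁻¹⁻¹ := fun x hx =>
  (mem_inv_iff (inv_ne_zero_of_ne_zero hI)).mpr fun y hy =>
    mul_comm y x ▸ (mem_inv_iff hI).mp hy x hx

theorem inv_inv_mono (hI : I ≠ 0) (hIJ : I ≤ J) : I⁻¹⁻¹ ≤ J⁻¹⁻¹ :=
  have hJ : J ≠ 0 := ne_bot_of_le_ne_bot hI hIJ
  inv_anti_mono (inv_ne_zero_of_ne_zero hJ) (inv_ne_zero_of_ne_zero hI) (inv_anti_mono hI hJ hIJ)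

theorem one_le_inv (hI : I ≠ 0) (hI1 : I ≤ 1) : 1 ≤ I⁻¹ :=
  inv_one (G := FractionalIdeal R⁰ K) ▸ inv_anti_mono hI (one_ne_zero' _) hI1

theorem inv_inv_le_one (hI1 : I ≤ 1) : I⁻¹⁻¹ ≤ 1 := by
  rcases eq_or_ne I 0 with rfl | hI
  · simp [inv_zero']
  · simpa using inv_anti_mono (one_ne_zero' (FractionalIdeal R⁰ K)) (inv_ne_zero_of_ne_zero hI)
      (one_le_inv hI hI1)

theorem inv_eq_one_of_one_mem_inv_inv (hI1 : I ≤ 1) (h : 1 ∈ I⁻¹⁻¹) : I⁻¹ = 1 := by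
  have hI : I ≠ 0 := by rintro rfl; simp [inv_zero'] at h
  refine le_antisymm (fun x hx => ?_) (one_le_inv hI hI1)
  simpa using (mem_inv_iff (inv_ne_zero_of_ne_zero hI)).mp h x hx

end FractionalIdeal

theorem Ideal.eq_top_of_one_mem_coeIdeal {R K : Type*} [CommRing R] [Field K] [Algebra R K]
    [IsFractionRing R K] {I : Ideal R} (h : (1 : K) ∈ (I : FractionalIdeal R⁰ K)) : I = ⊤ :=
  (FractionalIdeal.coeIdeal_eq_one.mp
    (le_antisymm FractionalIdeal.coeIdeal_le_one (FractionalIdeal.one_le.mpr h))).trans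
    Ideal.one_eq_top

open FractionalIdeal

section

variable {D : Type*} [CommRing D] [IsDomain D]

local notation "K" => FractionRing D

theorem inv_inv_le_tClos {E F : FractionalIdeal D⁰ K} (hF0 : F ≠ 0) (hFE : F ≤ E)
    (hFG : (F : Submodule D K).FG) : ((F⁻¹⁻¹ : FractionalIdeal D⁰ K) : Submodule D K) ≤ tClos D E :=
  le_iSup₂_of_le F ⟨hF0, hFE, hFG⟩ le_rfl

theorem coe_le_tClos (E : FractionalIdeal D⁰ K) : (E : Submodule D K) ≤ tClos D E := by
  intro x hx
  rcases eq_or_ne x 0 with rfl | hx0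
  · exact zero_mem _
  refine inv_inv_le_tClos (spanSingleton_ne_zero_iff.mpr hx0) (spanSingleton_le_iff_mem.mpr hx)
    ((coe_spanSingleton D⁰ x).symm ▸ Submodule.fg_span_singleton x) ?_
  exact le_inv_inv (spanSingleton_ne_zero_iff.mpr hx0) (mem_spanSingleton_self D⁰ x)

theorem tClos_zero : tClos D 0 = ⊥ :=
  iSup₂_eq_bot.mpr fun _ hF => absurd (FractionalIdeal.le_zero_iff.mp hF.2.1) hF.1

theorem tClos_le_one {E : FractionalIdeal D⁰ K} (hE : E ≤ 1) :
    tClos D E ≤ ((1 : FractionalIdeal D⁰ K) : Submodule D K) :=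
  iSup₂_le fun _ hF => coe_le_coe.mpr (inv_inv_le_one (hF.2.1.trans hE))

theorem exists_mem_inv_inv_of_mem_tClos {E : FractionalIdeal D⁰ K} (hE : E ≠ 0) {x : K}
    (hx : x ∈ tClos D E) :
    ∃ F : FractionalIdeal D⁰ K, F ≠ 0 ∧ F ≤ E ∧ (F : Submodule D K).FG ∧ x ∈ F⁻¹⁻¹ := by
  let S := {F : FractionalIdeal D⁰ K | F ≠ 0 ∧ F ≤ E ∧ (F : Submodule D K).FG}
  have : Nonempty S := by
    obtain ⟨y, hyE, hy0⟩ :=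
      Submodule.exists_mem_ne_zero_of_ne_bot (coeToSubmodule_ne_bot.mpr hE)
    exact ⟨⟨spanSingleton D⁰ y, spanSingleton_ne_zero_iff.mpr hy0,
      spanSingleton_le_iff_mem.mpr hyE,
      (coe_spanSingleton D⁰ y).symm ▸ Submodule.fg_span_singleton y⟩⟩
  have hdir : Directed (· ≤ ·)
      fun F : S => (((F : FractionalIdeal D⁰ K)⁻¹⁻¹ : FractionalIdeal D⁰ K) : Submodule D K) := by
    rintro ⟨F₁, h₁0, h₁E, h₁fg⟩ ⟨F₂, h₂0, h₂E, h₂fg⟩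
    refine ⟨⟨F₁ ⊔ F₂, ne_bot_of_le_ne_bot h₁0 le_sup_left, sup_le h₁E h₂E,
      coe_sup F₁ F₂ ▸ h₁fg.sup h₂fg⟩, ?_, ?_⟩
    · exact coe_le_coe.mpr (inv_inv_mono h₁0 le_sup_left)
    · exact coe_le_coe.mpr (inv_inv_mono h₂0 le_sup_right)
  rw [tClos, iSup_subtype'] at hx
  obtain ⟨⟨F, hF0, hFE, hFfg⟩, hxF⟩ := (Submodule.mem_iSup_of_directed _ hdir).mp hx
  exact ⟨F, hF0, hFE, hFfg, hxF⟩

theorem exists_isGV_le_of_one_mem_tClos {I : Ideal D} (h1 : (1 : K) ∈ tClos D I) :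
    ∃ J : Ideal D, IsGV J ∧ J ≤ I := by
  have hI : I ≠ ⊥ := by rintro rfl; simp [coeIdeal_bot, tClos_zero] at h1
  obtain ⟨F, hF0, hFI, hFfg, h1F⟩ :=
    exists_mem_inv_inv_of_mem_tClos (coeIdeal_ne_zero.mpr hI) h1
  obtain ⟨J, rfl⟩ := le_one_iff_exists_coeIdeal.mp (hFI.trans coeIdeal_le_one)
  exact ⟨J, ⟨coeIdeal_ne_zero.mp hF0, (coeIdeal_fg D⁰ (IsFractionRing.injective D K) J).mp hFfg,
    inv_eq_one_of_one_mem_inv_inv coeIdeal_le_one h1F⟩, (coeIdeal_le_coeIdeal K).mp hFI⟩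

theorem Ideal.eq_top_of_isT_of_isGV_le {I J : Ideal D} (hI : I.IsT) (hJ : IsGV J) (hJI : J ≤ I) :
    I = ⊤ := by
  have h1J : (1 : K) ∈ ((J : FractionalIdeal D⁰ K)⁻¹⁻¹ : FractionalIdeal D⁰ K) := by
    rw [hJ.2.2, inv_one]
    exact one_mem_one D⁰
  have h1I := inv_inv_le_tClos (E := I) (coeIdeal_ne_zero.mpr hJ.1)
    ((coeIdeal_le_coeIdeal K).mpr hJI)
    ((coeIdeal_fg D⁰ (IsFractionRing.injective D K) J).mpr hJ.2.1) h1J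
  rw [← hI] at h1I
  exact Ideal.eq_top_of_one_mem_coeIdeal h1I

theorem Ideal.IsMaximal.isT_of_forall_isGV_eq_top (hGV : ∀ J : Ideal D, IsGV J → J = ⊤)
    {M : Ideal D} (hM : M.IsMaximal) : M.IsT := by
  set I : Ideal D := (tClos D M).comap (Algebra.linearMap D K)
  have hMI : M ≤ I := fun m hm => coe_le_tClos _ (mem_coeIdeal_of_mem D⁰ hm)
  have hI : I ≠ ⊤ := fun hI => by
    have h1 : (1 : K) ∈ tClos D M := by simpa [I] using (Ideal.eq_top_iff_one I).mp hI
    obtain ⟨J, hJ, hJM⟩ := exists_isGV_le_of_one_mem_tClos h1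
    exact hM.ne_top (top_le_iff.mp (hGV J hJ ▸ hJM))
  have hIM : I = M := (hM.eq_of_le hI hMI).symm
  refine le_antisymm (coe_le_tClos _) fun x hx => ?_
  obtain ⟨a, rfl⟩ := (mem_one_iff D⁰).mp (tClos_le_one coeIdeal_le_one hx)
  exact mem_coeIdeal_of_mem D⁰ (hIM ▸ show a ∈ I from hx)

theorem isGV_top : IsGV (⊤ : Ideal D) :=
  ⟨top_ne_bot, ⟨{1}, by simp⟩, by rw [coeIdeal_top, inv_one]⟩

theorem subset_wClos (E : FractionalIdeal D⁰ K) : (E : Set K) ⊆ wClos D E := fun x hx =>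
  ⟨⊤, isGV_top, fun j _ => Algebra.smul_def j x ▸ Submodule.smul_mem _ j hx⟩

theorem isW_of_forall_isGV_eq_top (hGV : ∀ J : Ideal D, IsGV J → J = ⊤)
    (E : FractionalIdeal D⁰ K) : IsW E := by
  refine subset_antisymm (subset_wClos E) ?_
  rintro x ⟨J, hJ, hxJ⟩
  simpa using hxJ 1 (hGV J hJ ▸ Submodule.mem_top)

theorem Ideal.eq_top_of_isW_of_isGV_le {I J : Ideal D} (hI : IsW (I : FractionalIdeal D⁰ K))
    (hJ : IsGV J) (hJI : J ≤ I) : I = ⊤ := by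
  have h1 : (1 : K) ∈ wClos D I := ⟨J, hJ, fun j hj => by
    rw [mul_one]; exact mem_coeIdeal_of_mem D⁰ (hJI hj)⟩
  rw [← hI] at h1
  exact Ideal.eq_top_of_one_mem_coeIdeal h1

end

/-- For an integral domain `D` the following are equivalent:
(i) `D` is a DW-domain (every nonzero fractional ideal is a `w`-ideal);
(ii) every nonzero prime ideal of `D` is a `w`-ideal;
(iii) every maximal ideal of `D` is a `w`-ideal;
(iv) every maximal ideal of `D` is a `t`-ideal;
(v) `GV(D) = {D}`. -/
theorem dw_domain_tfae (D : Type*) [CommRing D] [IsDomain D] :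
    List.TFAE
      [ ∀ E : FractionalIdeal D⁰ (FractionRing D), E ≠ 0 → IsW E,
        ∀ P : Ideal D, P.IsPrime → P ≠ ⊥ →
          IsW (P : FractionalIdeal D⁰ (FractionRing D)),
        ∀ M : Ideal D, M.IsMaximal → IsW (M : FractionalIdeal D⁰ (FractionRing D)),
        ∀ M : Ideal D, M.IsMaximal → M.IsT,
        ∀ J : Ideal D, IsGV J → J = ⊤ ] := by
  tfae_have 1 → 2 := fun h P _ hP0 => h _ (coeIdeal_ne_zero.mpr hP0)
  tfae_have 2 → 5 := fun h J hJ => by_contra fun hJ' =>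
    let ⟨M, hM, hJM⟩ := J.exists_le_maximal hJ'
    hM.ne_top <| Ideal.eq_top_of_isW_of_isGV_le
      (h M hM.isPrime (ne_bot_of_le_ne_bot hJ.1 hJM)) hJ hJM
  tfae_have 3 → 5 := fun h J hJ => by_contra fun hJ' =>
    let ⟨M, hM, hJM⟩ := J.exists_le_maximal hJ'
    hM.ne_top <| Ideal.eq_top_of_isW_of_isGV_le (h M hM) hJ hJM
  tfae_have 4 → 5 := fun h J hJ => by_contra fun hJ' =>
    let ⟨M, hM, hJM⟩ := J.exists_le_maximal hJ'
    hM.ne_top <| Ideal.eq_top_of_isT_of_isGV_le (h M hM) hJ hJM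
  tfae_have 5 → 1 := fun h E _ => isW_of_forall_isGV_eq_top h E
  tfae_have 5 → 3 := fun h M _ => isW_of_forall_isGV_eq_top h M
  tfae_have 5 → 4 := fun h M hM => hM.isT_of_forall_isGV_eq_top h
  tfae_finish
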